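/- If x is an ultrafilter on ℕ such that the <*-unbounded family {f_ξ : ξ < 𝔟} (fixed <*-increasing, strictly increasing functions) is unbounded in <_x, and A is a converging family of infinite subsets to x, then the family { f_ξ ∘ next(a,·) : ξ < 𝔟, a ∈ A } is <*-dominating in ℕ^ℕ. -/

import Mathlib

open Set Filter Cardinal

/-- `a ⊆* b` : `a` is almost contained in `b` (mod finite). -/
def almostLE (a b : Set ℕ) : Prop := (a \ b).Finite

/-- `f <* g` : eventual domination mod finite. -/
def domLT (f g : ℕ → ℕ) : Prop := {k | g k ≤ f k}.Finite

/-- The bounding number 𝔟. -/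
noncomputable def bNum : Cardinal :=
  sInf { c | ∃ F : Set (ℕ → ℕ), Cardinal.mk F = c ∧ ∀ g : ℕ → ℕ, ∃ f ∈ F, ¬ domLT f g }

/-- The dominating number 𝔡. -/
noncomputable def dNum : Cardinal :=
  sInf { c | ∃ F : Set (ℕ → ℕ), Cardinal.mk F = c ∧ ∀ g : ℕ → ℕ, ∃ f ∈ F, domLT g f }

/-- `c` reaps the family `A`. -/
def Reaps (c : Set ℕ) (A : Set (Set ℕ)) : Prop :=
  ∀ a ∈ A, (a ∩ c).Infinite ∧ (a \ c).Infinite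

/-- The reaping number 𝔯. -/
noncomputable def rNum : Cardinal :=
  sInf { c | ∃ A : Set (Set ℕ), Cardinal.mk A = c ∧ (∀ a ∈ A, a.Infinite) ∧
    ∀ d : Set ℕ, ¬ Reaps d A }

/-- The splitting number 𝔰. -/
noncomputable def sNum : Cardinal :=
  sInf { c | ∃ A : Set (Set ℕ), Cardinal.mk A = c ∧ ∀ b : Set ℕ, b.Infinite →
    ∃ a ∈ A, (b ∩ a).Infinite ∧ (b \ a).Infinite }

/-- `next(a,k)`, the least element of `a` above `k`. -/
noncomputable def nxt (a : Set ℕ) (k : ℕ) : ℕ := sInf {n | n ∈ a ∧ k < n}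

/-- ℕ*, the Stone–Čech remainder, realized as the space of free ultrafilters on ℕ. -/
abbrev NStar : Type := {x : Ultrafilter ℕ // (Filter.cofinite : Filter ℕ) ≤ ↑x}

/-- For `a ⊆ ℕ`, the basic clopen set `a*` of free ultrafilters containing `a`. -/
def setStar (a : Set ℕ) : Set NStar := {x | a ∈ x.1}

/-- The ideal `I_A = { a ⊆ ℕ : a* ⊆ A }`. -/
def idealOf (A : Set NStar) : Set (Set ℕ) := {a | setStar a ⊆ A}

/-- `A` is almost clopen: the closure of an open set with a unique boundary point. -/
def AlmostClopen (A : Set NStar) : Prop :=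
  (∃ U : Set NStar, IsOpen U ∧ A = closure U) ∧ ∃! x : NStar, x ∈ frontier A

/-- `x` is a tie-point as witnessed by the closed sets `A`, `B`. -/
def TiePoint {X : Type*} [TopologicalSpace X] (x : X) (A B : Set X) : Prop :=
  IsClosed A ∧ IsClosed B ∧ A ∪ B = Set.univ ∧ A ∩ B = {x} ∧
    x ∈ closure (A \ {x}) ∧ x ∈ closure (B \ {x})

/-- An almost clopen set `A` is simple of type `κ`: `I_A` has a strictly ⊆*-increasing,
⊆*-cofinal chain of order type `κ`. -/
def SimpleType (A : Set NStar) (κ : Cardinal) : Prop :=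
  ∃ a : Ordinal → Set ℕ,
    (∀ α, α < κ.ord → a α ∈ idealOf A) ∧
    (∀ α β, α < β → β < κ.ord → almostLE (a α) (a β) ∧ (a β \ a α).Infinite) ∧
    (∀ c ∈ idealOf A, ∃ α, α < κ.ord ∧ almostLE c (a α))

/-- The family `A` converges to the ultrafilter `x`. -/
def Converges (A : Set (Set ℕ)) (x : Ultrafilter ℕ) : Prop :=
  ∀ U ∈ x, Cardinal.mk {a : Set ℕ // a ∈ A ∧ (a \ U).Infinite} < Cardinal.mk A

/-- `A` is hereditarily unreapable. -/
def HeredUnreapable (A : Set (Set ℕ)) : Prop :=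
  ∀ B ⊆ A, (∃ c : Set ℕ, Reaps c B) → Cardinal.mk B < Cardinal.mk A

/-- `f <_x g` for an ultrafilter `x`. -/
def ultLT (x : Ultrafilter ℕ) (f g : ℕ → ℕ) : Prop := {n | f n < g n} ∈ x

/-- A fixed `<*`-increasing `<*`-unbounded family `{f_ξ : ξ < 𝔟}` of strictly increasing
functions. -/
def UnbddChain (f : Ordinal → ℕ → ℕ) : Prop :=
  (∀ ξ, ξ < bNum.ord → StrictMono (f ξ)) ∧
  (∀ η ξ, η < ξ → ξ < bNum.ord → domLT (f η) (f ξ)) ∧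
  (∀ g : ℕ → ℕ, ∃ ξ, ξ < bNum.ord ∧ ¬ domLT (f ξ) g)

/-- `x` is an almost `P_λ`-point. -/
def AlmostPPoint (x : Ultrafilter ℕ) (lam : Cardinal) : Prop :=
  ∀ F : Set (Set ℕ), (∀ U ∈ F, U ∈ x) → Cardinal.mk F < lam →
    ∃ p : Set ℕ, p.Infinite ∧ ∀ U ∈ F, almostLE p U

/-! Given `g`, take `ξ` with `f ξ ≥ h` on a set `U ∈ x`, where `h n` exceeds `g` on
`[0, n)`; convergence yields `a ∈ A` with `a ⊆* U`, and then `g k < h (next(a,k)) ≤ f ξ (next(a,k))`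
for all large `k`, since `next(a,k) > k` lands in `U` eventually. -/

lemma domLT_iff_eventually {f g : ℕ → ℕ} : domLT f g ↔ ∀ᶠ k in atTop, f k < g k := by
  simp [domLT, ← Nat.cofinite_eq_atTop, Filter.eventually_cofinite]

lemma almostLE_iff_eventually {a b : Set ℕ} : almostLE a b ↔ ∀ᶠ n in atTop, n ∈ a → n ∈ b := by
  rw [almostLE, ← Nat.cofinite_eq_atTop, Filter.eventually_cofinite]
  simp only [Classical.not_imp]
  rfl

lemma not_ultLT_iff {x : Ultrafilter ℕ} {f g : ℕ → ℕ} :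
    ¬ ultLT x f g ↔ {n | g n ≤ f n} ∈ x := by
  rw [ultLT, ← Ultrafilter.compl_mem_iff_notMem]
  simp only [Set.compl_ofPred, not_lt]

lemma Converges.exists_almostLE {A : Set (Set ℕ)} {x : Ultrafilter ℕ} (hA : Converges A x)
    {U : Set ℕ} (hU : U ∈ x) : ∃ a ∈ A, almostLE a U := by
  by_contra! hnone
  exact (hA U hU).ne <| Cardinal.mk_congr <|
    Equiv.subtypeEquivRight fun a => ⟨And.left, fun ha => ⟨ha, hnone a ha⟩⟩

lemma nxt_mem_and_lt {a : Set ℕ} (ha : a.Infinite) (k : ℕ) : nxt a k ∈ a ∧ k < nxt a k :=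
  Nat.sInf_mem (ha.exists_gt k)

lemma tendsto_nxt_atTop {a : Set ℕ} (ha : a.Infinite) : Tendsto (nxt a) atTop atTop :=
  tendsto_atTop_mono (fun k => (nxt_mem_and_lt ha k).2.le) tendsto_id

def prefixBound (g : ℕ → ℕ) (n : ℕ) : ℕ := (Finset.range n).sup g + 1

lemma lt_prefixBound (g : ℕ → ℕ) {k n : ℕ} (hkn : k < n) : g k < prefixBound g n :=
  Nat.lt_succ_of_le (Finset.le_sup (Finset.mem_range.2 hkn))

lemma domLT_comp_nxt {a : Set ℕ} (ha : a.Infinite) {g F : ℕ → ℕ}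
    (haF : almostLE a {n | prefixBound g n ≤ F n}) : domLT g (fun k => F (nxt a k)) := by
  rw [domLT_iff_eventually]
  filter_upwards [(tendsto_nxt_atTop ha).eventually (almostLE_iff_eventually.1 haF)] with k hk
  obtain ⟨hmem, hlt⟩ := nxt_mem_and_lt ha k
  exact (lt_prefixBound g hlt).trans_le (hk hmem)

theorem stmt8_general (x : Ultrafilter ℕ)
    (f : Ordinal → ℕ → ℕ)
    (hunbdd : ∀ g : ℕ → ℕ, ∃ ξ, ξ < bNum.ord ∧ ¬ ultLT x (f ξ) g)
    (A : Set (Set ℕ)) (hAinf : ∀ a ∈ A, a.Infinite)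
    (hconv : Converges A x) :
    ∀ g : ℕ → ℕ, ∃ ξ, ξ < bNum.ord ∧ ∃ a ∈ A, domLT g (fun k => f ξ (nxt a k)) := by
  intro g
  obtain ⟨ξ, hξ, hnot⟩ := hunbdd (prefixBound g)
  obtain ⟨a, haA, haU⟩ := hconv.exists_almostLE (not_ultLT_iff.1 hnot)
  exact ⟨ξ, hξ, a, haA, domLT_comp_nxt (hAinf a haA) haU⟩

theorem stmt8 (x : Ultrafilter ℕ) (hx : (Filter.cofinite : Filter ℕ) ≤ ↑x)
    (f : Ordinal → ℕ → ℕ) (hf : UnbddChain f)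
    (hunbdd : ∀ g : ℕ → ℕ, ∃ ξ, ξ < bNum.ord ∧ ¬ ultLT x (f ξ) g)
    (A : Set (Set ℕ)) (hAinf : ∀ a ∈ A, a.Infinite)
    (hconv : Converges A x) :
    ∀ g : ℕ → ℕ, ∃ ξ, ξ < bNum.ord ∧ ∃ a ∈ A, domLT g (fun k => f ξ (nxt a k)) :=
  stmt8_general x f hunbdd A hAinf hconv
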